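/- arXiv:2308.16679 — 8 statements merged into one kernel-verified Lean document; each statement's English description precedes it below -/
import Mathlib

section
/- For all integers q≥2 and D≥4 with D not divisible by 6, there exists no distance-regular graph with classical parameters (D, q, q, q²(q^D−1)/(q−1)). -/
open Finset

/-- The Gaussian bracket `[j] = 1 + q + ⋯ + q^(j-1)`. -/
def gaussBracket (q : ℤ) (j : ℕ) : ℤ := ∑ l ∈ Finset.range j, q ^ l

/-- `G` is a distance-regular graph with diameter `D` and intersection numbers `p h i j`,
where `p h i j = |Γ_i(x) ∩ Γ_j(y)|` for any vertices `x, y` at distance `h`. -/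
def IsDRGWith {X : Type*} [Fintype X] (G : SimpleGraph X) (D : ℕ)
    (p : ℕ → ℕ → ℕ → ℕ) : Prop :=
  G.Connected ∧ (∀ x y : X, G.dist x y ≤ D) ∧ (∃ x y : X, G.dist x y = D) ∧
    ∀ h i j : ℕ, h ≤ D → i ≤ D → j ≤ D → ∀ x y : X, G.dist x y = h →
      Set.ncard {z : X | G.dist x z = i ∧ G.dist y z = j} = p h i j

/-- `G` is a distance-regular graph with classical parameters `(D, q, α, β)` and
intersection numbers `p`. -/
def HasClassicalParams {X : Type*} [Fintype X] (G : SimpleGraph X) (D : ℕ)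
    (p : ℕ → ℕ → ℕ → ℕ) (q : ℤ) (α β : ℚ) : Prop :=
  IsDRGWith G D p ∧ q ≠ 0 ∧ q ≠ -1 ∧
    (∀ i : ℕ, 1 ≤ i → i ≤ D →
      (p i 1 (i - 1) : ℚ) =
        (gaussBracket q i : ℚ) * (1 + α * (gaussBracket q (i - 1) : ℚ))) ∧
    (∀ i : ℕ, i + 1 ≤ D →
      (p i 1 (i + 1) : ℚ) =
        ((gaussBracket q D : ℚ) - (gaussBracket q i : ℚ)) * (β - α * (gaussBracket q i : ℚ)))

/-- The `i`-th dual idempotent `E*_i(x)` of `G` with respect to the base vertex `x`. -/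
noncomputable def dualIdem {X : Type*} [Fintype X] [DecidableEq X] (G : SimpleGraph X)
    (x : X) (i : ℕ) : Matrix X X ℂ :=
  Matrix.diagonal fun y => if G.dist x y = i then 1 else 0

/-- The Terwilliger algebra `T(x)`: the subalgebra of `Mat_X(ℂ)` generated by the
adjacency matrix of `G` and the dual idempotents `E*_i(x)`. -/
noncomputable def terwilliger {X : Type*} [Fintype X] [DecidableEq X] (G : SimpleGraph X)
    [DecidableRel G.Adj] (x : X) : Subalgebra ℂ (Matrix X X ℂ) :=
  Algebra.adjoin ℂ ({G.adjMatrix ℂ} ∪ Set.range (dualIdem G x))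

/-- The lowering matrix `L = ∑_{i=1}^{D} E*_{i-1} A E*_i`. -/
noncomputable def lowering {X : Type*} [Fintype X] [DecidableEq X] (G : SimpleGraph X)
    [DecidableRel G.Adj] (x : X) (D : ℕ) : Matrix X X ℂ :=
  ∑ i ∈ Finset.Icc 1 D, dualIdem G x (i - 1) * G.adjMatrix ℂ * dualIdem G x i

/-- The raising matrix `R = ∑_{i=0}^{D-1} E*_{i+1} A E*_i`. -/
noncomputable def raising {X : Type*} [Fintype X] [DecidableEq X] (G : SimpleGraph X)
    [DecidableRel G.Adj] (x : X) (D : ℕ) : Matrix X X ℂ :=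
  ∑ i ∈ Finset.range D, dualIdem G x (i + 1) * G.adjMatrix ℂ * dualIdem G x i

/-- The Terwilliger algebra `T_f(x)` of the bipartite graph `Γ_f(x)`: the subalgebra of
`Mat_X(ℂ)` generated by `L`, `R` and the dual idempotents `E*_i(x)`. -/
noncomputable def terwilligerF {X : Type*} [Fintype X] [DecidableEq X] (G : SimpleGraph X)
    [DecidableRel G.Adj] (x : X) (D : ℕ) : Subalgebra ℂ (Matrix X X ℂ) :=
  Algebra.adjoin ℂ ({lowering G x D, raising G x D} ∪ Set.range (dualIdem G x))

/-- `W` is a `T`-module: a subspace of the standard module `V = ℂ^X`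
invariant under every member of `T`. -/
def IsTMod {X : Type*} [Fintype X] [DecidableEq X] (T : Subalgebra ℂ (Matrix X X ℂ))
    (W : Submodule ℂ (X → ℂ)) : Prop :=
  ∀ B ∈ T, ∀ w ∈ W, B.mulVec w ∈ W

/-- `W` is an irreducible `T`-module. -/
def IsIrredTMod {X : Type*} [Fintype X] [DecidableEq X] (T : Subalgebra ℂ (Matrix X X ℂ))
    (W : Submodule ℂ (X → ℂ)) : Prop :=
  IsTMod T W ∧ W ≠ ⊥ ∧
    ∀ W' : Submodule ℂ (X → ℂ), W' ≤ W → IsTMod T W' → W' = ⊥ ∨ W' = W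

/-- The subspace `E*_i W`. -/
noncomputable def subconst {X : Type*} [Fintype X] [DecidableEq X] (G : SimpleGraph X)
    (x : X) (i : ℕ) (W : Submodule ℂ (X → ℂ)) : Submodule ℂ (X → ℂ) :=
  W.map (dualIdem G x i).mulVecLin

/-- `W` has endpoint `r`, i.e. `r = min {i : E*_i W ≠ 0}`. -/
def HasEndpoint {X : Type*} [Fintype X] [DecidableEq X] (G : SimpleGraph X) (x : X)
    (W : Submodule ℂ (X → ℂ)) (r : ℕ) : Prop :=
  subconst G x r W ≠ ⊥ ∧ ∀ i < r, subconst G x i W = ⊥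

/-- `W` is thin: `dim E*_i W ≤ 1` for all `i`. -/
def IsThin {X : Type*} [Fintype X] [DecidableEq X] (G : SimpleGraph X) (x : X)
    (W : Submodule ℂ (X → ℂ)) : Prop :=
  ∀ i : ℕ, Module.finrank ℂ (subconst G x i W) ≤ 1

/-- The diameter of the module `W`: `|{i : E*_i W ≠ 0}| - 1`. -/
noncomputable def modDiameter {X : Type*} [Fintype X] [DecidableEq X] (G : SimpleGraph X)
    (x : X) (W : Submodule ℂ (X → ℂ)) : ℕ :=
  Set.ncard {i : ℕ | subconst G x i W ≠ ⊥} - 1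

/-- `W` and `W'` are isomorphic as `T`-modules: there is a linear isomorphism
`σ : W → W'` with `σ B = B σ` on `W` for all `B ∈ T`. -/
def TIso {X : Type*} [Fintype X] [DecidableEq X] (T : Subalgebra ℂ (Matrix X X ℂ))
    (W W' : Submodule ℂ (X → ℂ)) : Prop :=
  ∃ σ : W ≃ₗ[ℂ] W', ∀ B ∈ T, ∀ (w : W) (hw : B.mulVec (w : X → ℂ) ∈ W),
    ((σ ⟨B.mulVec (w : X → ℂ), hw⟩ : W') : X → ℂ) = B.mulVec ((σ w : W') : X → ℂ)

/-- The entries of a tridiagonal parameter matrix with diagonal `1`, subdiagonal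
entries `e⁻` and superdiagonal entries `e⁺` (rows and columns indexed `1, …, D`). -/
def pmEntry (em ep : ℕ → ℂ) (i j : ℕ) : ℂ :=
  if i = j then 1 else if i = j + 1 then em i else if j = i + 1 then ep i else 0

/-- `Γ` supports a uniform structure with respect to `x`: there exist a parameter matrix
`U = (e_{ij})_{1 ≤ i,j ≤ D}` and a vector `f ∈ ℂ^D` such that
`(e⁻_i RL² + LRL + e⁺_i L²R) v = f_i L v` for every `v ∈ E*_i V` and `1 ≤ i ≤ D`,
where `L` and `R` are the lowering and raising matrices of the bipartite graph `Γ_f(x)`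
(equivalently, of `Γ`) with respect to `x`. -/
def SupportsUniform {X : Type*} [Fintype X] [DecidableEq X] (G : SimpleGraph X)
    [DecidableRel G.Adj] (x : X) (D : ℕ) : Prop :=
  ∃ em ep f : ℕ → ℂ,
    em 1 = 0 ∧ ep D = 0 ∧
    ((∀ i : ℕ, 2 ≤ i → i ≤ D → em i ≠ 0) ∨ (∀ i : ℕ, 2 ≤ i → i ≤ D → ep (i - 1) ≠ 0)) ∧
    (∀ s t : ℕ, 1 ≤ s → s ≤ t → t ≤ D →
      (Matrix.of fun a b : Fin (t - s + 1) =>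
        pmEntry em ep (s + (a : ℕ)) (s + (b : ℕ))).det ≠ 0) ∧
    (∀ i : ℕ, 1 ≤ i → i ≤ D → ∀ v : X → ℂ, (∀ y : X, G.dist x y ≠ i → v y = 0) →
      (em i • (raising G x D * lowering G x D * lowering G x D)
        + lowering G x D * raising G x D * lowering G x D
        + ep i • (lowering G x D * lowering G x D * raising G x D)).mulVec v
        = f i • (lowering G x D).mulVec v)

/-- `H` is a strongly regular graph with parameters `(n, k, λ, μ)`. -/
def IsSRGcard {Y : Type*} [Fintype Y] (H : SimpleGraph Y) (n k l m : ℕ) : Prop :=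
  Fintype.card Y = n ∧
    (∀ v : Y, Set.ncard (H.neighborSet v) = k) ∧
    (∀ v w : Y, H.Adj v w → Set.ncard (H.neighborSet v ∩ H.neighborSet w) = l) ∧
    (∀ v w : Y, v ≠ w → ¬ H.Adj v w → Set.ncard (H.neighborSet v ∩ H.neighborSet w) = m)

open scoped Classical in
/-- The adjacency matrix of a graph over `ℝ`. -/
noncomputable def adjMatR {Y : Type*} [Fintype Y] (H : SimpleGraph Y) : Matrix Y Y ℝ :=
  Matrix.of fun a b => if H.Adj a b then (1 : ℝ) else 0


/-!
For `α = q`, `β = q²[D]` the intersection numbers are `c_i = [i]²` and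
`b_i = q^(i+1) [D - i] (q[D] - [i])`, so the valencies satisfy `k_i ∏_{u ≤ i} [u]² = ∏_{j < i} b_j`.
Take `n ∈ {2, 3}` with `n ∤ D`, `i = n ⌊D/n⌋`, and a prime `ℓ ∣ [n]` dividing `[u]` only when
`n ∣ u`. The multiples of `n` among `1, …, i` and among `D - i + 1, …, D` are the same, so
comparing `ℓ`-adic valuations, the factors `q[D] - [j]` (`j < i`) must carry at least
`∑_{u ≤ i} v_ℓ([u]) ≥ 1`. This fails for `n = 3` with `ℓ ∣ q² + q + 1`, `ℓ ≠ 3`, and for `n = 2`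
with `ℓ` an odd prime factor of `q + 1`, since then every `q[D] - [j]` is prime to `ℓ`. If `q + 1`
is a power of two, then `4 ∣ q + 1` and for `ℓ = 2` those factors carry only `⌊D/2⌋`, against
`∑ v_2([u]) ≥ 2⌊D/2⌋`. Hence `6 ∣ D`.
-/

theorem gaussBracket_zero (q : ℤ) : gaussBracket q 0 = 0 := by
  simp [gaussBracket]

theorem gaussBracket_one (q : ℤ) : gaussBracket q 1 = 1 := by
  simp [gaussBracket]

theorem gaussBracket_two (q : ℤ) : gaussBracket q 2 = q + 1 := by
  simp [gaussBracket, sum_range_succ, add_comm]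

theorem gaussBracket_three (q : ℤ) : gaussBracket q 3 = q ^ 2 + q + 1 := by
  simp [gaussBracket, sum_range_succ]; ring

theorem gaussBracket_succ (q : ℤ) (n : ℕ) :
    gaussBracket q (n + 1) = q * gaussBracket q n + 1 :=
  geom_sum_succ

theorem gaussBracket_add (q : ℤ) (a c : ℕ) :
    gaussBracket q (a + c) = gaussBracket q a + q ^ a * gaussBracket q c := by
  simp only [gaussBracket, sum_range_add, mul_sum, pow_add]

theorem gaussBracket_pos {q : ℤ} (hq : 0 < q) {n : ℕ} (hn : n ≠ 0) : 0 < gaussBracket q n :=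
  sum_pos (fun l _ ↦ pow_pos hq l) (nonempty_range_iff.mpr hn)

theorem gaussBracket_sub_gaussBracket (q : ℤ) {j D : ℕ} (h : j ≤ D) :
    gaussBracket q D - gaussBracket q j = q ^ j * gaussBracket q (D - j) := by
  rw [sub_eq_iff_eq_add', ← gaussBracket_add, Nat.add_sub_cancel' h]

theorem gaussBracket_periodic {K : Type*} [CommRing K] {q : ℤ} {n : ℕ}
    (h : (gaussBracket q n : K) = 0) :
    Function.Periodic (fun u ↦ (gaussBracket q u : K)) n := fun u ↦ by
  simp [gaussBracket_add, h]

theorem intCast_gaussBracket_mod {K : Type*} [CommRing K] {q : ℤ} {n : ℕ}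
    (h : (gaussBracket q n : K) = 0) (u : ℕ) :
    (gaussBracket q u : K) = gaussBracket q (u % n) :=
  ((gaussBracket_periodic h).map_mod_nat u).symm

/-- The multiples of `n` among `D - j`, `j < n m`, are exactly those among `1, …, n m`. -/
theorem sum_range_sub_eq_sum_range_succ {M : Type*} [AddCommMonoid M] {w : ℕ → M} {n m D : ℕ}
    (hw : ∀ u, ¬ n ∣ u → w u = 0) (h₁ : n * m ≤ D) (h₂ : D < n * m + n) :
    ∑ j ∈ range (n * m), w (D - j) = ∑ j ∈ range (n * m), w (j + 1) := by
  rw [← sum_filter_of_ne (p := fun j ↦ n ∣ D - j) fun j _ h ↦ not_imp_comm.mp (hw _) h,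
    ← sum_filter_of_ne (p := fun j ↦ n ∣ j + 1) fun j _ h ↦ not_imp_comm.mp (hw _) h]
  refine sum_nbij' (fun j ↦ D - 1 - j) (fun j ↦ D - 1 - j) ?_ ?_ ?_ ?_ ?_
  · intro j hj
    simp only [mem_filter, mem_range] at hj ⊢
    obtain ⟨hj, t, ht⟩ := hj
    have htm : n * t ≤ n * m :=
      Nat.mul_le_mul_left n (Nat.lt_succ_iff.mp (Nat.lt_of_mul_lt_mul_left (a := n) (by lia)))
    refine ⟨by omega, ?_⟩
    rw [show D - 1 - j + 1 = D - j by omega]; exact ⟨t, ht⟩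
  · intro j hj
    simp only [mem_filter, mem_range] at hj ⊢
    obtain ⟨hj, hdvd⟩ := hj
    have := Nat.le_of_dvd j.succ_pos hdvd
    refine ⟨by omega, ?_⟩
    rwa [show D - (D - 1 - j) = j + 1 by omega]
  · intro j hj
    simp only [mem_filter, mem_range] at hj
    omega
  · intro j hj
    simp only [mem_filter, mem_range] at hj
    omega
  · intro j hj
    simp only [mem_filter, mem_range] at hj
    rw [show D - 1 - j + 1 = D - j by omega]

theorem exists_prime_ne_dvd {N : ℤ} {p : ℕ} (hp : p.Prime) (hpN : (p : ℤ) < N)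
    (hp2 : ¬ (p : ℤ) ^ 2 ∣ N) : ∃ ℓ : ℕ, ℓ.Prime ∧ ℓ ≠ p ∧ (ℓ : ℤ) ∣ N := by
  lift N to ℕ using by omega
  by_contra! h
  have hN := Nat.eq_prime_pow_of_unique_prime_dvd (p := p) (n := N) (by omega)
    fun hd hdN ↦ by_contra fun hne ↦ h _ hd hne (by exact_mod_cast hdN)
  rcases le_or_gt N.primeFactorsList.length 1 with ha | ha
  · have : N ≤ p := hN ▸ (Nat.pow_le_pow_right hp.pos ha).trans (pow_one p).le
    omega
  · rw [hN] at hp2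
    exact hp2 (by exact_mod_cast pow_dvd_pow p ha)

theorem natCast_ne_zero_of_prime_ne {ℓ p : ℕ} (hℓ : ℓ.Prime) (hp : p.Prime) (h : ℓ ≠ p) :
    (p : ZMod ℓ) ≠ 0 := by
  rwa [Ne, ZMod.natCast_eq_zero_iff, Nat.prime_dvd_prime_iff_eq hℓ hp]

def classicalB (q : ℤ) (D j : ℕ) : ℤ :=
  (gaussBracket q D - gaussBracket q j) * (q * (q * gaussBracket q D - gaussBracket q j))

/-- The valency recursion `k₀ = 1`, `k_{j+1} c_{j+1} = k_j b_j` for classical parameters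
`(D, q, q, q²[D])`, for which `c_j = [j]²` and `b_j = classicalB q D j`. -/
def ValencyRec (q : ℤ) (D : ℕ) (k : ℕ → ℤ) : Prop :=
  k 0 = 1 ∧ ∀ j < D, k (j + 1) * gaussBracket q (j + 1) ^ 2 = k j * classicalB q D j

theorem classicalB_eq (q : ℤ) {D j : ℕ} (h : j ≤ D) :
    classicalB q D j =
      q ^ (j + 1) * gaussBracket q (D - j) * (q * gaussBracket q D - gaussBracket q j) := by
  rw [classicalB, gaussBracket_sub_gaussBracket q h]; ring

namespace ValencyRec

variable {q : ℤ} {D : ℕ} {k : ℕ → ℤ}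

theorem mul_prod_sq (hk : ValencyRec q D k) {i : ℕ} (hi : i ≤ D) :
    k i * ∏ j ∈ range i, gaussBracket q (j + 1) ^ 2 = ∏ j ∈ range i, classicalB q D j := by
  induction i with
  | zero => simp [hk.1]
  | succ i ih =>
    rw [prod_range_succ, prod_range_succ]
    linear_combination (∏ j ∈ range i, gaussBracket q (j + 1) ^ 2) * hk.2 i hi +
      classicalB q D i * ih (by omega)

theorem sum_emultiplicity_le (hk : ValencyRec q D k) (hq : 0 < q) {ℓ : ℤ} (hℓ : Prime ℓ)
    (hℓq : ¬ ℓ ∣ q) {n m : ℕ} (h₁ : n * m ≤ D) (h₂ : D < n * m + n)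
    (hg : ∀ u, ¬ n ∣ u → ¬ ℓ ∣ gaussBracket q u) :
    ∑ j ∈ range (n * m), emultiplicity ℓ (gaussBracket q (j + 1)) ≤
      ∑ j ∈ range (n * m), emultiplicity ℓ (q * gaussBracket q D - gaussBracket q j) := by
  set S := ∑ j ∈ range (n * m), emultiplicity ℓ (gaussBracket q (j + 1))
  have hb : ∀ j ∈ range (n * m), emultiplicity ℓ (classicalB q D j) =
      emultiplicity ℓ (gaussBracket q (D - j)) +
        emultiplicity ℓ (q * gaussBracket q D - gaussBracket q j) := by
    intro j hj
    rw [classicalB_eq q (by simp only [mem_range] at hj; omega), emultiplicity_mul hℓ,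
      emultiplicity_mul hℓ, emultiplicity_pow hℓ, emultiplicity_eq_zero.mpr hℓq, mul_zero,
      zero_add]
  have hval := congrArg (emultiplicity ℓ) (hk.mul_prod_sq h₁)
  rw [emultiplicity_mul hℓ, Finset.emultiplicity_prod hℓ, Finset.emultiplicity_prod hℓ,
    sum_congr rfl hb, sum_add_distrib,
    sum_range_sub_eq_sum_range_succ (fun u hu ↦ emultiplicity_eq_zero.mpr (hg u hu)) h₁ h₂]
    at hval
  simp only [emultiplicity_pow hℓ, ← mul_sum, Nat.cast_ofNat] at hval
  have hS : S ≠ ⊤ := (ENat.sum_lt_top.2 fun j _ ↦ emultiplicity_lt_top.2 <|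
    Int.finiteMultiplicity_iff.2 ⟨fun h ↦ hℓ.not_isUnit (Int.isUnit_iff_natAbs_eq.2 h),
      (gaussBracket_pos hq j.succ_ne_zero).ne'⟩).ne
  refine ENat.addLECancellable_of_ne_top hS ?_
  rw [← two_mul, ← hval]
  exact le_add_self

theorem exists_intCast_eq_zero (hk : ValencyRec q D k) (hq : 0 < q) {ℓ : ℕ} (hℓ : ℓ.Prime)
    (hℓq : (q : ZMod ℓ) ≠ 0) {n m : ℕ} (hm : m ≠ 0) (h₁ : n * m ≤ D) (h₂ : D < n * m + n)
    (hn : (gaussBracket q n : ZMod ℓ) = 0)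
    (hg : ∀ u, ¬ n ∣ u → (gaussBracket q u : ZMod ℓ) ≠ 0) :
    ∃ j, (q : ZMod ℓ) * gaussBracket q D - gaussBracket q j = 0 := by
  simp only [ne_eq, ← Int.cast_mul, ← Int.cast_sub, ZMod.intCast_zmod_eq_zero_iff_dvd]
    at hn hg hℓq ⊢
  by_contra! h
  have hle := hk.sum_emultiplicity_le hq (Nat.prime_iff_prime_int.1 hℓ) hℓq h₁ h₂ hg
  rw [sum_eq_zero fun j _ ↦ emultiplicity_eq_zero.2 (h j)] at hle
  have hn1 : n ≠ 0 := by rintro rfl; omega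
  have hmem : n - 1 ∈ range (n * m) :=
    mem_range.2 (by have := Nat.le_mul_of_pos_right n (Nat.pos_of_ne_zero hm); omega)
  have hpos : (1 : ℕ∞) ≤ emultiplicity (ℓ : ℤ) (gaussBracket q (n - 1 + 1)) := by
    rw [Nat.sub_add_cancel (Nat.one_le_iff_ne_zero.2 hn1)]
    exact_mod_cast pow_dvd_iff_le_emultiplicity.1 (by simpa using hn)
  have := (single_le_sum (f := fun j ↦ emultiplicity (ℓ : ℤ) (gaussBracket q (j + 1)))
    (fun _ _ ↦ zero_le) hmem).trans hle
  exact absurd (hpos.trans this) (by simp)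

theorem not_prime_dvd_sq_add_add_one (hk : ValencyRec q D k) (hq : 0 < q) (hD : 3 ≤ D)
    (hD3 : ¬ 3 ∣ D) {ℓ : ℕ} (hℓ : ℓ.Prime) (hℓ3 : ℓ ≠ 3) : ¬ (ℓ : ℤ) ∣ q ^ 2 + q + 1 := by
  intro hℓq
  have hx : (q : ZMod ℓ) ^ 2 + q + 1 = 0 := by
    exact_mod_cast (ZMod.intCast_zmod_eq_zero_iff_dvd _ ℓ).2 hℓq
  have hℓ2 : ℓ ≠ 2 := by
    rintro rfl
    generalize (q : ZMod 2) = x at hx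
    revert x; decide
  have h2 : (2 : ZMod ℓ) ≠ 0 := by
    exact_mod_cast natCast_ne_zero_of_prime_ne hℓ Nat.prime_two hℓ2
  have h3 : (3 : ZMod ℓ) ≠ 0 := by
    exact_mod_cast natCast_ne_zero_of_prime_ne hℓ Nat.prime_three hℓ3
  have hg3 : (gaussBracket q 3 : ZMod ℓ) = 0 := by rw [gaussBracket_three]; exact_mod_cast hx
  have hper := intCast_gaussBracket_mod hg3
  obtain ⟨j, hj⟩ := hk.exists_intCast_eq_zero hq hℓ (by grind) (m := D / 3) (by omega)
    (by omega) (by omega) hg3 fun u hu ↦ by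
      rw [hper]
      rcases (show u % 3 = 1 ∨ u % 3 = 2 by omega) with h | h <;>
        simp [h, gaussBracket_one, gaussBracket_two] <;> grind
  rw [hper D, hper j] at hj
  rcases (show D % 3 = 1 ∨ D % 3 = 2 by omega) with h | h <;>
    rcases (show j % 3 = 0 ∨ j % 3 = 1 ∨ j % 3 = 2 by omega) with h' | h' | h' <;>
    simp [h, h', gaussBracket_zero, gaussBracket_one, gaussBracket_two] at hj <;> grind

theorem not_prime_dvd_add_one (hk : ValencyRec q D k) (hq : 0 < q) (hD : 2 ≤ D)
    (hD2 : ¬ 2 ∣ D) {ℓ : ℕ} (hℓ : ℓ.Prime) (hℓ2 : ℓ ≠ 2) : ¬ (ℓ : ℤ) ∣ q + 1 := by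
  intro hℓq
  have : Fact ℓ.Prime := ⟨hℓ⟩
  have hx : (q : ZMod ℓ) + 1 = 0 := by
    exact_mod_cast (ZMod.intCast_zmod_eq_zero_iff_dvd _ ℓ).2 hℓq
  have h2 : (2 : ZMod ℓ) ≠ 0 := by
    exact_mod_cast natCast_ne_zero_of_prime_ne hℓ Nat.prime_two hℓ2
  have hg2 : (gaussBracket q 2 : ZMod ℓ) = 0 := by rw [gaussBracket_two]; exact_mod_cast hx
  have hper := intCast_gaussBracket_mod hg2
  obtain ⟨j, hj⟩ := hk.exists_intCast_eq_zero hq hℓ (by grind) (m := D / 2) (by omega) (by omega)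
    (by omega) hg2 fun u hu ↦ by simp [hper u, show u % 2 = 1 by omega, gaussBracket_one]
  rw [hper D, hper j, show D % 2 = 1 by omega] at hj
  rcases (show j % 2 = 0 ∨ j % 2 = 1 by omega) with h | h <;>
    simp [h, gaussBracket_zero, gaussBracket_one] at hj <;> grind

theorem not_four_dvd_add_one (hk : ValencyRec q D k) (hq : 0 < q) (hD : 2 ≤ D)
    (hD2 : ¬ 2 ∣ D) : ¬ (4 : ℤ) ∣ q + 1 := by
  intro h4
  have hg2 : (gaussBracket q 2 : ZMod 4) = 0 := by
    rw [gaussBracket_two, ZMod.intCast_zmod_eq_zero_iff_dvd]; exact_mod_cast h4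
  have hgu : ∀ u, gaussBracket q u % 4 = if 2 ∣ u then 0 else 1 := fun u ↦ by
    have := (ZMod.intCast_eq_intCast_iff' _ _ 4).1 (intCast_gaussBracket_mod hg2 u)
    rcases Nat.mod_two_eq_zero_or_one u with h | h <;>
      simp [h, Nat.dvd_iff_mod_eq_zero, gaussBracket_zero, gaussBracket_one] at this ⊢ <;>
      omega
  have hfj : ∀ j,
      (q * gaussBracket q D - gaussBracket q j) % 4 = if 2 ∣ j + 1 then 2 else 3 := fun j ↦ by
    have hgD := hgu D
    have hgj := hgu j
    rw [if_neg hD2] at hgD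
    have : q * gaussBracket q D % 4 = 3 := by rw [Int.mul_emod, hgD]; omega
    split_ifs at hgj ⊢ <;> omega
  set m := D / 2
  have hle := hk.sum_emultiplicity_le hq Int.prime_two
    (by have := hgu 1; simp at this; omega) (n := 2) (m := m) (by omega) (by omega)
    (fun u hu ↦ by have := hgu u; simp only [hu, if_false] at this; omega)
  have hS : ∑ j ∈ range (2 * m), (if 2 ∣ j + 1 then 2 else 0 : ℕ∞) ≤
      ∑ j ∈ range (2 * m), emultiplicity (2 : ℤ) (gaussBracket q (j + 1)) := by
    refine sum_le_sum fun j _ ↦ ?_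
    split_ifs with h
    · have := hgu (j + 1); simp only [h, if_true] at this
      exact_mod_cast pow_dvd_iff_le_emultiplicity.1 (show (2 : ℤ) ^ 2 ∣ _ by norm_num; omega)
    · exact zero_le
  have hT : ∑ j ∈ range (2 * m), emultiplicity (2 : ℤ) (q * gaussBracket q D - gaussBracket q j)
      = ∑ j ∈ range (2 * m), (if 2 ∣ j + 1 then 1 else 0 : ℕ∞) := by
    refine sum_congr rfl fun j _ ↦ ?_
    have := hfj j
    split_ifs at this ⊢
    · exact_mod_cast emultiplicity_eq_coe.2 ⟨by norm_num; omega, by norm_num; omega⟩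
    · exact emultiplicity_eq_zero.2 (by omega)
  have := hS.trans (hle.trans hT.le)
  simp only [← sum_filter, sum_const, Nat.card_multiples, nsmul_eq_mul] at this
  norm_cast at this
  omega

theorem two_dvd (hk : ValencyRec q D k) (hq : 2 ≤ q) (hD : 2 ≤ D) : 2 ∣ D := by
  by_contra hD2
  obtain ⟨ℓ, hℓ, hℓ2, hℓq⟩ := exists_prime_ne_dvd (N := q + 1) Nat.prime_two
    (by push_cast; omega) (by push_cast; exact hk.not_four_dvd_add_one (by omega) hD hD2)
  exact hk.not_prime_dvd_add_one (by omega) hD hD2 hℓ hℓ2 hℓq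

theorem three_dvd (hk : ValencyRec q D k) (hq : 2 ≤ q) (hD : 3 ≤ D) : 3 ∣ D := by
  by_contra hD3
  have h9 : ¬ ((3 : ℕ) : ℤ) ^ 2 ∣ q ^ 2 + q + 1 := by
    rw [show ((3 : ℕ) : ℤ) ^ 2 = ((9 : ℕ) : ℤ) by norm_num, ← ZMod.intCast_zmod_eq_zero_iff_dvd]
    push_cast
    generalize (q : ZMod 9) = x
    revert x; decide
  obtain ⟨ℓ, hℓ, hℓ3, hℓq⟩ := exists_prime_ne_dvd Nat.prime_three (by push_cast; nlinarith) h9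
  exact hk.not_prime_dvd_sq_add_add_one (by omega) hD hD3 hℓ hℓ3 hℓq

end ValencyRec

namespace IsDRGWith

variable {X : Type*} [Fintype X] {G : SimpleGraph X} {D : ℕ} {p : ℕ → ℕ → ℕ → ℕ}

theorem card_sphere_zero (h : IsDRGWith G D p) (x : X) : #{y | G.dist x y = 0} = 1 :=
  card_eq_one.2 ⟨x, by ext y; simp [h.1.dist_eq_zero_iff, eq_comm]⟩

theorem card_filter_dist_eq (h : IsDRGWith G D p) {a i j : ℕ} (ha : a ≤ D) (hi : i ≤ D)
    (hj : j ≤ D) {x y : X} (hxy : G.dist x y = a) :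
    #{z | G.dist x z = i ∧ G.dist y z = j} = p a i j := by
  rw [← h.2.2.2 a i j ha hi hj x y hxy, Set.ncard_eq_toFinset_card', Set.toFinset_ofPred]

theorem card_sphere_succ_mul (h : IsDRGWith G D p) (x : X) {i : ℕ} (hi : i + 1 ≤ D) :
    #{y | G.dist x y = i + 1} * p (i + 1) 1 i = #{y | G.dist x y = i} * p i 1 (i + 1) := by
  refine card_mul_eq_card_mul (fun y z ↦ G.dist y z = 1) (fun y hy ↦ ?_) fun z hz ↦ ?_
  · simp only [mem_filter, mem_univ, true_and] at hy
    rw [bipartiteAbove, filter_filter]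
    simp_rw [and_comm (a := G.dist x _ = i)]
    exact h.card_filter_dist_eq hi (by omega) (by omega) (SimpleGraph.dist_comm.trans hy)
  · simp only [mem_filter, mem_univ, true_and] at hz
    rw [bipartiteBelow, filter_filter]
    simp_rw [SimpleGraph.dist_comm (u := _) (v := z), and_comm (a := G.dist x _ = i + 1)]
    exact h.card_filter_dist_eq (by omega) (by omega) hi (SimpleGraph.dist_comm.trans hz)

end IsDRGWith

theorem HasClassicalParams.valencyRec {X : Type*} [Fintype X] {G : SimpleGraph X} {D : ℕ}
    {p : ℕ → ℕ → ℕ → ℕ} {q : ℤ} (hq : q ≠ 1)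
    (h : HasClassicalParams G D p q q ((q : ℚ) ^ 2 * ((q : ℚ) ^ D - 1) / ((q : ℚ) - 1)))
    (x : X) : ValencyRec q D fun i ↦ (#{y | G.dist x y = i} : ℤ) := by
  obtain ⟨hG, -, -, hc, hb⟩ := h
  have hgD : ((q : ℚ) ^ D - 1) / ((q : ℚ) - 1) = gaussBracket q D := by
    rw [gaussBracket]; push_cast; exact (geom_sum_eq (by exact_mod_cast hq) D).symm
  refine ⟨by simp [hG.card_sphere_zero x], fun j hj ↦ ?_⟩
  have hcj : (p (j + 1) 1 j : ℤ) = gaussBracket q (j + 1) ^ 2 := by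
    have hcj := hc (j + 1) (by omega) hj
    rw [Nat.add_sub_cancel] at hcj
    exact_mod_cast show (p (j + 1) 1 j : ℚ) = ((gaussBracket q (j + 1) ^ 2 : ℤ) : ℚ) by
      rw [hcj, gaussBracket_succ]; push_cast; ring
  have hbj : (p j 1 (j + 1) : ℤ) = classicalB q D j := by
    have hbj := hb j hj
    rw [mul_div_assoc, hgD] at hbj
    exact_mod_cast show (p j 1 (j + 1) : ℚ) = ((classicalB q D j : ℤ) : ℚ) by
      rw [hbj, classicalB]; push_cast; ring
  rw [← hcj, ← hbj]
  beta_reduce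
  exact_mod_cast hG.card_sphere_succ_mul x hj

theorem stmt2 (q : ℤ) (hq : 2 ≤ q) (D : ℕ) (hD : 4 ≤ D) (hD6 : ¬ (6 ∣ D))
    {X : Type*} [Fintype X] (G : SimpleGraph X) (p : ℕ → ℕ → ℕ → ℕ) :
    ¬ HasClassicalParams G D p q (q : ℚ)
      ((q : ℚ) ^ 2 * ((q : ℚ) ^ D - 1) / ((q : ℚ) - 1)) := by
  intro h
  obtain ⟨x, -⟩ := h.1.2.2.1
  have hk := h.valencyRec (by omega) x
  exact hD6 (Nat.Coprime.mul_dvd_of_dvd_of_dvd (by norm_num)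
    (hk.two_dvd hq (by omega)) (hk.three_dvd hq (by omega)))
end

section
/- Let Γ be a non-bipartite distance-regular graph with classical parameters (D,q,α,β), where D≥4, q≥2 and α≠0. Fix a vertex x, suppose every irreducible T(x)-module with endpoint 1 is thin, and suppose Γ supports a uniform structure with respect to x. Then the local graph Δ(x) is not a conference graph. -/
open Finset

private lemma exists_adj_dist_sub' {X : Type*} {G : SimpleGraph X} (hconn : G.Connected)
    {u v : X} (h : G.dist u v ≠ 0) :
    ∃ w, G.Adj u w ∧ G.dist w v = G.dist u v - 1 := by
  obtain ⟨p, hp⟩ := hconn.exists_walk_length_eq_dist u v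
  cases p with
  | nil => rw [SimpleGraph.Walk.length_nil] at hp; omega
  | @cons _ b _ ha q =>
    refine ⟨b, ha, ?_⟩
    rw [SimpleGraph.Walk.length_cons] at hp
    have h1 : G.dist u b = 1 := SimpleGraph.dist_eq_one_iff_adj.mpr ha
    have h2 : G.dist b v ≤ q.length := SimpleGraph.dist_le q
    have h3 : G.dist u v ≤ G.dist u b + G.dist b v := hconn.dist_triangle
    omega

private lemma ncard_subtype_setOf' {X : Type*} (s : Set X) (Q : X → Prop) :
    Set.ncard {w : s | Q ↑w} = Set.ncard {z : X | z ∈ s ∧ Q z} := by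
  rw [← Set.ncard_image_of_injective {w : s | Q ↑w} Subtype.val_injective]
  congr 1
  ext z
  simp only [Set.mem_image, Set.mem_setOf_eq, Subtype.exists, exists_and_left, exists_prop,
    exists_eq_right_right]
  tauto


set_option maxHeartbeats 4000000 in
theorem stmt6 {X : Type*} [Fintype X] [DecidableEq X] (G : SimpleGraph X) [DecidableRel G.Adj]
    (D : ℕ) (q : ℤ) (α β : ℚ) (p : ℕ → ℕ → ℕ → ℕ)
    (hD : 4 ≤ D) (hq : 2 ≤ q) (hα : α ≠ 0)
    (hnonbip : ¬ G.Colorable 2)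
    (hcp : HasClassicalParams G D p q α β)
    (x : X)
    (hthin : ∀ W : Submodule ℂ (X → ℂ),
      IsIrredTMod (terwilliger G x) W → HasEndpoint G x W 1 → IsThin G x W)
    (hus : SupportsUniform G x D) :
    ¬ ∃ n k l m : ℕ, IsSRGcard (G.induce (G.neighborSet x)) n k l m ∧
        k = 2 * m ∧ l + 1 = m := by
  clear hthin hus hnonbip
  rintro ⟨n, k, l, m, ⟨hcard, hdeg, hlam, hmu⟩, hk2m, hlm⟩
  obtain ⟨⟨hconn, hdle, ⟨x0, y0, hx0y0⟩, hcnt⟩, hq0, hq1, hc, hb⟩ := hcp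
  have hm1 : 1 ≤ m := by omega
  have hD1 : 1 ≤ D := by omega
  have hD2 : 2 ≤ D := by omega
  -- x has a neighbor v
  have hxadj : ∃ v, G.Adj x v := by
    by_cases hxx : x = x0
    · have hne : G.dist x y0 ≠ 0 := by rw [hxx, hx0y0]; omega
      obtain ⟨w, hw, -⟩ := exists_adj_dist_sub' hconn hne
      exact ⟨w, hw⟩
    · have hne : G.dist x x0 ≠ 0 := fun h => hxx (hconn.dist_eq_zero_iff.mp h)
      obtain ⟨w, hw, -⟩ := exists_adj_dist_sub' hconn hne
      exact ⟨w, hw⟩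
  obtain ⟨v, hv⟩ := hxadj
  have hvmem : v ∈ G.neighborSet x := hv
  have hdxv : G.dist x v = 1 := SimpleGraph.dist_eq_one_iff_adj.mpr hv
  have hdvx : G.dist v x = 1 := by rwa [SimpleGraph.dist_comm] at hdxv
  -- the degree count
  have hdeg_eq : ∀ u : X, Set.ncard {z : X | G.dist u z = 1} = p 0 1 1 := by
    intro u
    have h := hcnt 0 1 1 (by omega) hD1 hD1 u u SimpleGraph.dist_self
    simpa [and_self] using h
  -- the vertex partition around v : p 0 1 1 = 1 + p 1 1 1 + p 1 1 2
  have hsplitN : p 0 1 1 = 1 + p 1 1 1 + p 1 1 2 := by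
    have hset : {z : X | G.dist v z = 1}
        = {x} ∪ ({z : X | G.dist v z = 1 ∧ G.dist x z = 1}
            ∪ {z : X | G.dist v z = 1 ∧ G.dist x z = 2}) := by
      ext z
      simp only [Set.mem_setOf_eq, Set.mem_union, Set.mem_singleton_iff]
      constructor
      · intro hz
        have ht := hconn.dist_triangle (u := x) (v := v) (w := z)
        rcases (by omega : G.dist x z = 0 ∨ G.dist x z = 1 ∨ G.dist x z = 2) with h | h | h
        · left; exact (hconn.dist_eq_zero_iff.mp h).symm
        · right; left; exact ⟨hz, h⟩
        · right; right; exact ⟨hz, h⟩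
      · rintro (rfl | ⟨hz, -⟩ | ⟨hz, -⟩)
        · exact hdvx
        · exact hz
        · exact hz
    have hd12 : Disjoint {z : X | G.dist v z = 1 ∧ G.dist x z = 1}
        {z : X | G.dist v z = 1 ∧ G.dist x z = 2} := by
      rw [Set.disjoint_left]
      rintro z ⟨-, h1⟩ ⟨-, h2⟩
      omega
    have hd0 : Disjoint ({x} : Set X) ({z : X | G.dist v z = 1 ∧ G.dist x z = 1}
        ∪ {z : X | G.dist v z = 1 ∧ G.dist x z = 2}) := by
      rw [Set.disjoint_left]
      rintro z rfl h
      rcases h with ⟨-, h⟩ | ⟨-, h⟩ <;> rw [SimpleGraph.dist_self] at h <;> omega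
    have e1 := hdeg_eq v
    rw [hset, Set.ncard_union_eq hd0 (Set.toFinite _) (Set.toFinite _),
        Set.ncard_union_eq hd12 (Set.toFinite _) (Set.toFinite _), Set.ncard_singleton,
        hcnt 1 1 1 hD1 hD1 hD1 v x hdvx, hcnt 1 1 2 hD1 hD1 hD2 v x hdvx] at e1
    omega
  -- k = p 1 1 1
  have hkp : k = p 1 1 1 := by
    have h1 := hdeg ⟨v, hvmem⟩
    have h2 : ((G.induce (G.neighborSet x)).neighborSet ⟨v, hvmem⟩ : Set _)
        = {w : G.neighborSet x | G.Adj v ↑w} := rfl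
    rw [h2, ncard_subtype_setOf'] at h1
    have h3 : {z : X | z ∈ G.neighborSet x ∧ G.Adj v z}
        = {z : X | G.dist x z = 1 ∧ G.dist v z = 1} := by
      ext z
      simp [SimpleGraph.mem_neighborSet, SimpleGraph.dist_eq_one_iff_adj]
    rw [h3, hcnt 1 1 1 hD1 hD1 hD1 x v hdxv] at h1
    omega
  -- a nonadjacent pair in the local graph
  have hnonadj : ∃ a b : G.neighborSet x, a ≠ b ∧ ¬ (G.induce (G.neighborSet x)).Adj a b := by
    by_contra hcon
    push_neg at hcon
    have hdv := hdeg ⟨v, hvmem⟩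
    have hkpos : 0 < ((G.induce (G.neighborSet x)).neighborSet ⟨v, hvmem⟩).ncard := by
      rw [hdv]; omega
    obtain ⟨w0, hw0⟩ := (Set.ncard_pos (Set.toFinite _)).mp hkpos
    have hlval := hlam ⟨v, hvmem⟩ w0 hw0
    have hsub : (G.induce (G.neighborSet x)).neighborSet ⟨v, hvmem⟩ \ {w0}
        ⊆ (G.induce (G.neighborSet x)).neighborSet ⟨v, hvmem⟩
          ∩ (G.induce (G.neighborSet x)).neighborSet w0 := by
      rintro z ⟨hz1, hz2⟩
      exact ⟨hz1, (hcon z w0 (by simpa using hz2)).symm⟩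
    have hle := Set.ncard_le_ncard hsub (Set.toFinite _)
    rw [Set.ncard_diff_singleton_of_mem hw0, hdv, hlval] at hle
    omega
  obtain ⟨a, b, hab, hnadj⟩ := hnonadj
  have hmuv := hmu a b hab hnadj
  have hga : G.Adj x ↑a := a.2
  have hgb : G.Adj x ↑b := b.2
  have hnab : ¬ G.Adj ↑a ↑b := hnadj
  have habne : (a : X) ≠ (b : X) := fun h => hab (Subtype.ext h)
  have hdab : G.dist ↑a ↑b = 2 := by
    have d1 : G.dist (a : X) x = 1 := by
      rw [SimpleGraph.dist_comm]; exact SimpleGraph.dist_eq_one_iff_adj.mpr hga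
    have d2 : G.dist x ↑b = 1 := SimpleGraph.dist_eq_one_iff_adj.mpr hgb
    have t1 := hconn.dist_triangle (u := (a : X)) (v := x) (w := (b : X))
    have hne0 : G.dist (a : X) ↑b ≠ 0 := fun h => habne (hconn.dist_eq_zero_iff.mp h)
    have hne1 : G.dist (a : X) ↑b ≠ 1 := fun h => hnab (SimpleGraph.dist_eq_one_iff_adj.mp h)
    omega
  -- c₂ ≥ 1 + m
  have hc2m : 1 + m ≤ p 2 1 1 := by
    have hcnt2 := hcnt 2 1 1 hD2 hD1 hD1 ↑a ↑b hdab
    have hSm : (Subtype.val '' ((G.induce (G.neighborSet x)).neighborSet a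
        ∩ (G.induce (G.neighborSet x)).neighborSet b)).ncard = m := by
      rw [Set.ncard_image_of_injective _ Subtype.val_injective]
      exact hmuv
    have hxS : x ∉ Subtype.val '' ((G.induce (G.neighborSet x)).neighborSet a
        ∩ (G.induce (G.neighborSet x)).neighborSet b) := by
      rintro ⟨w, -, hw⟩
      exact G.irrefl (hw ▸ w.2)
    have hins : insert x (Subtype.val '' ((G.induce (G.neighborSet x)).neighborSet a
        ∩ (G.induce (G.neighborSet x)).neighborSet b))
        ⊆ {z : X | G.dist ↑a z = 1 ∧ G.dist ↑b z = 1} := by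
      rintro z (rfl | hz)
      · constructor
        · rw [SimpleGraph.dist_comm]; exact SimpleGraph.dist_eq_one_iff_adj.mpr hga
        · rw [SimpleGraph.dist_comm]; exact SimpleGraph.dist_eq_one_iff_adj.mpr hgb
      · obtain ⟨w, ⟨hw1, hw2⟩, rfl⟩ := hz
        exact ⟨SimpleGraph.dist_eq_one_iff_adj.mpr hw1, SimpleGraph.dist_eq_one_iff_adj.mpr hw2⟩
    have hcard := Set.ncard_le_ncard hins (Set.toFinite _)
    rw [Set.ncard_insert_of_notMem hxS (Set.toFinite _), hSm, hcnt2] at hcard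
    omega
  -- b_{D-1} ≥ 1
  have hbD1 : 1 ≤ p (D - 1) 1 D := by
    have hne : G.dist x0 y0 ≠ 0 := by rw [hx0y0]; omega
    obtain ⟨w, hw, hwd⟩ := exists_adj_dist_sub' hconn hne
    rw [hx0y0] at hwd
    have hcnt3 := hcnt (D - 1) 1 D (by omega) hD1 le_rfl w y0 hwd
    have hx0mem : x0 ∈ {z : X | G.dist w z = 1 ∧ G.dist y0 z = D} := by
      constructor
      · rw [SimpleGraph.dist_comm]; exact SimpleGraph.dist_eq_one_iff_adj.mpr hw
      · rw [SimpleGraph.dist_comm]; exact hx0y0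
    have hpos : 0 < Set.ncard {z : X | G.dist w z = 1 ∧ G.dist y0 z = D} :=
      (Set.ncard_pos (Set.toFinite _)).mpr ⟨x0, hx0mem⟩
    omega
  clear hdeg hlam hmu hcnt hcard hdeg_eq hdle hnab hnadj hmuv hab hga hgb habne hdab hv hvmem hdxv hdvx hx0y0
  -- Gaussian bracket values
  have hq0' : (0 : ℚ) < (q : ℚ) := by exact_mod_cast (by omega : (0:ℤ) < q)
  have hr2 : (2 : ℚ) ≤ (q : ℚ) := by exact_mod_cast hq
  have hQ0 : ((gaussBracket q 0 : ℤ) : ℚ) = 0 := by simp [gaussBracket]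
  have hQ1 : ((gaussBracket q 1 : ℤ) : ℚ) = 1 := by simp [gaussBracket]
  have hQ2 : ((gaussBracket q 2 : ℤ) : ℚ) = 1 + (q : ℚ) := by
    simp [gaussBracket, Finset.sum_range_succ]
  have hQmono : ∀ i j : ℕ, i ≤ j → (gaussBracket q i : ℤ) ≤ gaussBracket q j := by
    intro i j hij
    unfold gaussBracket
    apply Finset.sum_le_sum_of_subset_of_nonneg (Finset.range_subset_range.mpr hij)
    intro l _ _
    exact pow_nonneg (by omega) l
  have hQ3v : ((gaussBracket q 3 : ℤ) : ℚ) = 1 + (q:ℚ) + (q:ℚ)^2 := by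
    push_cast [gaussBracket, Finset.sum_range_succ]
    ring
  have hQ4v : ((gaussBracket q 4 : ℤ) : ℚ) = 1 + (q:ℚ) + (q:ℚ)^2 + (q:ℚ)^3 := by
    push_cast [gaussBracket, Finset.sum_range_succ]
    ring
  have hT3 : 1 + (q:ℚ) + (q:ℚ)^2 ≤ ((gaussBracket q (D-1) : ℤ) : ℚ) := by
    rw [← hQ3v]
    exact_mod_cast hQmono 3 (D-1) (by omega)
  have hS4 : 1 + (q:ℚ) + (q:ℚ)^2 + (q:ℚ)^3 ≤ ((gaussBracket q D : ℤ) : ℚ) := by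
    rw [← hQ4v]
    exact_mod_cast hQmono 4 D hD
  have hgap : gaussBracket q D = gaussBracket q (D-1) + q^(D-1) := by
    conv_lhs => rw [show D = (D-1)+1 by omega]
    simp [gaussBracket, Finset.sum_range_succ]
  have hSTpos : (0:ℚ) < ((gaussBracket q D : ℤ) : ℚ) - ((gaussBracket q (D-1) : ℤ) : ℚ) := by
    rw [hgap]
    push_cast
    have hp1 : (0:ℚ) < (q:ℚ) ^ (D-1) := pow_pos hq0' _
    linarith
  -- parameter equations over ℚ
  have e011 : (p 0 1 1 : ℚ) = ((gaussBracket q D : ℤ) : ℚ) * β := by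
    have h := hb 0 (by omega)
    rw [hQ0] at h
    rw [h]; ring
  have e112 : (p 1 1 2 : ℚ) = (((gaussBracket q D : ℤ) : ℚ) - 1) * (β - α) := by
    have h := hb 1 (by omega)
    rw [hQ1] at h
    rw [h]; ring
  have e211 : (p 2 1 1 : ℚ) = (1 + (q:ℚ)) * (1 + α) := by
    have h := hc 2 (by omega) hD2
    norm_num at h
    rw [hQ2, hQ1] at h
    rw [h]; ring
  have eD : (p D 1 (D-1) : ℚ)
      = ((gaussBracket q D : ℤ) : ℚ) * (1 + α * ((gaussBracket q (D-1) : ℤ) : ℚ)) := by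
    exact hc D hD1 le_rfl
  have eB : (p (D-1) 1 D : ℚ)
      = (((gaussBracket q D : ℤ) : ℚ) - ((gaussBracket q (D-1) : ℤ) : ℚ))
        * (β - α * ((gaussBracket q (D-1) : ℤ) : ℚ)) := by
    have h := hb (D-1) (by omega)
    rwa [show D - 1 + 1 = D by omega] at h
  -- k as a rational expression
  have hsplitQ : (p 0 1 1 : ℚ) = 1 + (p 1 1 1 : ℚ) + (p 1 1 2 : ℚ) := by
    exact_mod_cast congrArg (Nat.cast : ℕ → ℚ) hsplitN
  have hK : (p 1 1 1 : ℚ) = β - 1 + α * (((gaussBracket q D : ℤ) : ℚ) - 1) := by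
    rw [e011, e112] at hsplitQ
    nlinarith [hsplitQ]
  have hKm : (p 1 1 1 : ℚ) = 2 * (m : ℚ) := by
    have h : p 1 1 1 = 2 * m := by omega
    exact_mod_cast h
  have hc2q : 1 + (m : ℚ) ≤ (p 2 1 1 : ℚ) := by exact_mod_cast hc2m
  have hBq : (1:ℚ) ≤ (p (D-1) 1 D : ℚ) := by exact_mod_cast hbD1
  have hCDq : (0:ℚ) ≤ (p D 1 (D-1) : ℚ) := Nat.cast_nonneg _
  have hmq : (1:ℚ) ≤ (m : ℚ) := by exact_mod_cast hm1
  have hTpos : (0:ℚ) < ((gaussBracket q (D-1) : ℤ) : ℚ) := by nlinarith [hT3, hr2, sq_nonneg ((q:ℚ))]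
  have hSpos : (0:ℚ) < ((gaussBracket q D : ℤ) : ℚ) := by nlinarith [hS4, hr2, sq_nonneg ((q:ℚ)), sq_nonneg ((q:ℚ)-1)]
  rcases lt_trichotomy α 0 with hneg | hzero | hpos
  · -- case α < 0
    have hlt : (p 2 1 1 : ℚ) < 1 + (q:ℚ) := by rw [e211]; nlinarith
    have hle2 : (p 2 1 1 : ℚ) ≤ (q:ℚ) := by
      have h1 : ((p 2 1 1 : ℕ) : ℤ) < 1 + q := by exact_mod_cast hlt
      have h2 : ((p 2 1 1 : ℕ) : ℤ) ≤ q := by omega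
      exact_mod_cast h2
    have hα1 : α * (1 + (q:ℚ)) ≤ -1 := by rw [e211] at hle2; nlinarith
    have h5 : (0:ℚ) ≤ ((gaussBracket q D : ℤ) : ℚ)
        * (1 + α * ((gaussBracket q (D-1) : ℤ) : ℚ)) := by rw [← eD]; exact hCDq
    have h6 : (0:ℚ) ≤ 1 + α * ((gaussBracket q (D-1) : ℤ) : ℚ) := by
      by_contra hcon
      push_neg at hcon
      nlinarith [mul_pos hSpos (by linarith :
        (0:ℚ) < -(1 + α * ((gaussBracket q (D-1) : ℤ) : ℚ)))]
    have prodA : (0:ℚ) ≤ (1 + (q:ℚ)) * (1 + α * ((gaussBracket q (D-1) : ℤ) : ℚ)) :=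
      mul_nonneg (by linarith) h6
    have prodB : α * (1 + (q:ℚ)) * ((gaussBracket q (D-1) : ℤ) : ℚ)
        ≤ -1 * ((gaussBracket q (D-1) : ℤ) : ℚ) :=
      mul_le_mul_of_nonneg_right hα1 hTpos.le
    nlinarith [prodA, prodB, hT3, hr2]
  · exact hα hzero
  · -- case α > 0
    have hgt : 1 + (q:ℚ) < (p 2 1 1 : ℚ) := by rw [e211]; nlinarith
    have hge : (q:ℚ) + 2 ≤ (p 2 1 1 : ℚ) := by
      have h1 : 1 + q < ((p 2 1 1 : ℕ) : ℤ) := by exact_mod_cast hgt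
      have h2 : q + 2 ≤ ((p 2 1 1 : ℕ) : ℤ) := by omega
      exact_mod_cast h2
    have hα1 : 1 ≤ α * (1 + (q:ℚ)) := by rw [e211] at hge; nlinarith
    have hBeq : (1:ℚ) ≤ (((gaussBracket q D : ℤ) : ℚ) - ((gaussBracket q (D-1) : ℤ) : ℚ))
        * (β - α * ((gaussBracket q (D-1) : ℤ) : ℚ)) := by rw [← eB]; exact hBq
    have hbT : (0:ℚ) < β - α * ((gaussBracket q (D-1) : ℤ) : ℚ) := by
      by_contra hcon
      push_neg at hcon
      nlinarith [mul_nonneg hSTpos.le (by linarith :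
        (0:ℚ) ≤ -(β - α * ((gaussBracket q (D-1) : ℤ) : ℚ)))]
    have h2m : 2 * (m:ℚ) = β - 1 + α * (((gaussBracket q D : ℤ) : ℚ) - 1) := by
      rw [← hKm, hK]
    have hmain : 2 + (β - 1 + α * (((gaussBracket q D : ℤ) : ℚ) - 1))
        ≤ 2 * ((1 + (q:ℚ)) * (1 + α)) := by
      rw [e211] at hc2q
      linarith
    have h9 : (0:ℚ) ≤ ((q:ℚ) - 2) * ((q:ℚ) + 1)^2 :=
      mul_nonneg (by linarith) (sq_nonneg _)
    have h10 : (0:ℚ) ≤ (2*(q:ℚ) + 1) * (α * (1 + (q:ℚ)) - 1) :=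
      mul_nonneg (by linarith) (by linarith)
    have h11 : (0:ℚ) ≤ α * (((gaussBracket q (D-1) : ℤ) : ℚ) + ((gaussBracket q D : ℤ) : ℚ)
        - 2*(q:ℚ) - 3 - (2*(q:ℚ)+1) * (1 + (q:ℚ))) := by
      apply mul_nonneg hpos.le
      nlinarith [h9, hT3, hS4]
    nlinarith [h10, h11, hmain, hbT]
end

section
/- Let Γ be a non-bipartite distance-regular graph with classical parameters (D,q,α,β), where D≥4, q≥2 and α≠0. Fix a vertex x, suppose every irreducible T(x)-module with endpoint 1 is thin, and suppose Γ supports a uniform structure with respect to x. Then η₄ := αq(q^{D−1}−1)/(q−1) − 1 satisfies η₄ ≥ 1. -/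
open Finset

lemma geodesic_step {X : Type*} (G : SimpleGraph X) (hconn : G.Connected)
    {x y : X} {i : ℕ} (hi : 1 ≤ i) (hxy : G.dist x y = i) :
    ∃ z : X, G.dist x z = 1 ∧ G.dist y z = i - 1 := by
  have hne : G.dist x y ≠ 0 := by omega
  obtain ⟨w, hw⟩ := (SimpleGraph.Reachable.of_dist_ne_zero hne).exists_walk_length_eq_dist
  have hlen : 0 < w.length := by omega
  have hnil : ¬ w.Nil := by
    rw [SimpleGraph.Walk.not_nil_iff_lt_length]; exact hlen
  refine ⟨w.getVert 1, ?_, ?_⟩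
  · exact SimpleGraph.dist_eq_one_iff_adj.mpr (SimpleGraph.Walk.adj_snd hnil)
  · have h1 : G.dist (w.getVert 1) y ≤ w.tail.length := G.dist_le w.tail
    have h2 : w.tail.length + 1 = w.length := SimpleGraph.Walk.length_tail_add_one hnil
    have h3 : G.dist x y ≤ G.dist x (w.getVert 1) + G.dist (w.getVert 1) y :=
      hconn.dist_triangle
    have h4 : G.dist x (w.getVert 1) = 1 :=
      SimpleGraph.dist_eq_one_iff_adj.mpr (SimpleGraph.Walk.adj_snd hnil)
    have := G.dist_comm (u := y) (v := w.getVert 1)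
    omega

lemma exists_at_dist {X : Type*} (G : SimpleGraph X) (hconn : G.Connected)
    {x y : X} {D : ℕ} (hxy : G.dist x y = D) :
    ∀ k, k ≤ D → ∃ z : X, G.dist x z = D - k := by
  intro k
  induction k with
  | zero => intro _; exact ⟨y, by simpa using hxy⟩
  | succ n ih =>
    intro hn
    obtain ⟨z, hz⟩ := ih (by omega)
    have h1 : 1 ≤ D - n := by omega
    have hz' : G.dist z x = D - n := by rw [G.dist_comm]; exact hz
    obtain ⟨w, hw1, hw2⟩ := geodesic_step G hconn h1 hz'
    exact ⟨w, by omega⟩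

set_option maxHeartbeats 2000000 in
theorem stmt7 {X : Type*} [Fintype X] [DecidableEq X] (G : SimpleGraph X) [DecidableRel G.Adj]
    (D : ℕ) (q : ℤ) (α β : ℚ) (p : ℕ → ℕ → ℕ → ℕ)
    (hD : 4 ≤ D) (hq : 2 ≤ q) (hα : α ≠ 0)
    (hnonbip : ¬ G.Colorable 2)
    (hcp : HasClassicalParams G D p q α β)
    (x : X)
    (hthin : ∀ W : Submodule ℂ (X → ℂ),
      IsIrredTMod (terwilliger G x) W → HasEndpoint G x W 1 → IsThin G x W)
    (hus : SupportsUniform G x D) :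
    1 ≤ α * (q : ℚ) * ((q : ℚ) ^ (D - 1) - 1) / ((q : ℚ) - 1) - 1 := by
  obtain ⟨⟨hconn, hdle, ⟨x0, y0, hxy0⟩, hcount⟩, hq0, hq1, hc, hb⟩ := hcp
  -- vertices at distance 2 and 3 from x0
  obtain ⟨y2, hy2⟩ := exists_at_dist G hconn hxy0 (D - 2) (by omega)
  obtain ⟨y3, hy3⟩ := exists_at_dist G hconn hxy0 (D - 3) (by omega)
  have hy2 : G.dist x0 y2 = 2 := by omega
  have hy3 : G.dist x0 y3 = 3 := by omega
  -- c_2 ≥ 1 and c_3 ≥ 1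
  have hpos : ∀ i : ℕ, 1 ≤ i → i ≤ D → ∀ y : X, G.dist x0 y = i → 1 ≤ p i 1 (i - 1) := by
    intro i h1 h2 y hy
    obtain ⟨z, hz1, hz2⟩ := geodesic_step G hconn h1 hy
    have hne : {z : X | G.dist x0 z = 1 ∧ G.dist y z = i - 1}.Nonempty := ⟨z, hz1, hz2⟩
    have hcard := hcount i 1 (i - 1) h2 (by omega) (by omega) x0 y hy
    have := (Set.ncard_pos (Set.toFinite _)).mpr hne
    omega
  have hp2 := hpos 2 (by norm_num) (by omega) y2 hy2
  have hp3 := hpos 3 (by norm_num) (by omega) y3 hy3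
  -- classical parameter formulas
  have hgb0 : gaussBracket q 0 = 0 := rfl
  have hgb1 : gaussBracket q 1 = 1 := by simp [gaussBracket]
  have hgb2 : gaussBracket q 2 = 1 + q := by
    simp [gaussBracket, Finset.sum_range_succ]
  have hc2 := hc 2 (by norm_num) (by omega)
  have hc3 := hc 3 (by norm_num) (by omega)
  rw [show (2:ℕ) - 1 = 1 from rfl, hgb1, hgb2] at hc2
  rw [show (3:ℕ) - 1 = 2 from rfl, hgb2] at hc3
  push_cast at hc2 hc3
  -- m = α(1+q) is a nonzero integer, ≥ 1
  have hqQ : (2:ℚ) ≤ (q:ℚ) := by exact_mod_cast hq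
  set m : ℤ := (p 2 1 1 : ℤ) - (1 + q) with hm_def
  have hmQ : α * (1 + (q:ℚ)) = (m : ℚ) := by
    push_cast [hm_def]
    linear_combination -hc2
  have hm_ne : m ≠ 0 := by
    intro h
    apply hα
    have h1q : (0:ℚ) < 1 + (q:ℚ) := by linarith
    have hz : α * (1 + (q:ℚ)) = 0 := by rw [hmQ, h]; norm_num
    rcases mul_eq_zero.mp hz with h' | h'
    · exact h'
    · linarith
  have hm_nonneg : 0 ≤ m := by
    by_contra hneg
    push_neg at hneg
    have hmle' : m ≤ -1 := by omega
    have hmle : (m : ℚ) ≤ -1 := by exact_mod_cast hmle'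
    have hgb3 : gaussBracket q 3 = 1 + q + q^2 := by
      simp [gaussBracket, Finset.sum_range_succ]
    rw [hgb3] at hc3
    push_cast at hc3
    have h1 : (1:ℚ) ≤ (p 3 1 2 : ℚ) := by exact_mod_cast hp3
    nlinarith [hc3, h1, hmQ, hqQ, sq_nonneg ((q:ℚ))]
  have hm1 : 1 ≤ m := by omega
  have hα_ge : 1 ≤ α * (1 + (q:ℚ)) := by rw [hmQ]; exact_mod_cast hm1
  -- final arithmetic
  have hpow : ((q:ℚ)) ^ 3 ≤ ((q:ℚ)) ^ (D - 1) := by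
    apply pow_le_pow_right₀ (by linarith)
    omega
  have hq1Q : (0:ℚ) < (q:ℚ) - 1 := by linarith
  rw [le_sub_iff_add_le, le_div_iff₀ hq1Q]
  have hQ0 : (0:ℚ) < (q:ℚ) := by linarith
  have h1Q : (0:ℚ) < 1 + (q:ℚ) := by linarith
  have hA : 0 < α := by
    by_contra h
    push_neg at h
    nlinarith [hα_ge, h1Q]
  have h3 : (1:ℚ) ≤ (q:ℚ)^3 := one_le_pow₀ (by linarith)
  have c1 : (0:ℚ) ≤ (q:ℚ) * ((q:ℚ)^3 - 1) := mul_nonneg hQ0.le (by linarith)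
  have c2 : 2*((q:ℚ)-1)*(1+(q:ℚ)) ≤ (q:ℚ)*((q:ℚ)^3-1) := by
    nlinarith [mul_nonneg (by linarith : (0:ℚ) ≤ (q:ℚ)-2) (by positivity : (0:ℚ) ≤ (q:ℚ)^3)]
  have c3 : (q:ℚ)*((q:ℚ)^3-1) ≤ α*((q:ℚ)*((q:ℚ)^3-1))*(1+(q:ℚ)) := by
    nlinarith [mul_nonneg c1 (by linarith : (0:ℚ) ≤ α*(1+(q:ℚ)) - 1)]
  have c4 : 2*((q:ℚ)-1) ≤ α*((q:ℚ)*((q:ℚ)^3-1)) := by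
    have h5 : (2*((q:ℚ)-1))*(1+(q:ℚ)) ≤ (α*((q:ℚ)*((q:ℚ)^3-1)))*(1+(q:ℚ)) := by
      linarith [c2, c3]
    exact le_of_mul_le_mul_right h5 h1Q
  have c5 : α*((q:ℚ)*((q:ℚ)^3-1)) ≤ α*((q:ℚ)*((q:ℚ)^(D-1)-1)) := by
    apply mul_le_mul_of_nonneg_left _ hA.le
    nlinarith [hpow, hQ0]
  linarith [c4, c5]
end

section
/- For every integer q≥2, the integer (q+1)(q²+2q+2)(q⁴+2q³+2q²+2q−1) does not divide the integer q²(q²+1)(q²+q+1)²(q³+q²+1)(q⁵+q⁴+2)(q⁵+2q⁴+2q³+2q²+q+2). -/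
theorem stmt11 (q : ℤ) (hq : 2 ≤ q) :
    ¬ ((q + 1) * (q ^ 2 + 2 * q + 2) * (q ^ 4 + 2 * q ^ 3 + 2 * q ^ 2 + 2 * q - 1) ∣
      q ^ 2 * (q ^ 2 + 1) * (q ^ 2 + q + 1) ^ 2 * (q ^ 3 + q ^ 2 + 1) *
        (q ^ 5 + q ^ 4 + 2) * (q ^ 5 + 2 * q ^ 4 + 2 * q ^ 3 + 2 * q ^ 2 + q + 2)) := by
  intro h
  rcases lt_or_ge q 31 with h31 | h31
  · interval_cases q <;> revert h <;> decide
  · set D : ℤ := (q + 1) * (q ^ 2 + 2 * q + 2) * (q ^ 4 + 2 * q ^ 3 + 2 * q ^ 2 + 2 * q - 1)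
      with hD
    have h2 : D ∣ (-34*q^6 - 56*q^5 - 80*q^4 - 76*q^3 - 6*q^2 + 8*q + 4) := by
      have hq2 : D ∣ D * (q^14 + q^13 + 2*q^12 + 3*q^11 + 2*q^10 + 6*q^9 + q^8 + 5*q^7 +
          8*q^6 - 7*q^5 + 16*q^4 - 8*q^3 + 4*q^2 + 4*q + 2) := Dvd.intro _ rfl
      have heq : -34*q^6 - 56*q^5 - 80*q^4 - 76*q^3 - 6*q^2 + 8*q + 4 =
          q ^ 2 * (q ^ 2 + 1) * (q ^ 2 + q + 1) ^ 2 * (q ^ 3 + q ^ 2 + 1) *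
            (q ^ 5 + q ^ 4 + 2) * (q ^ 5 + 2 * q ^ 4 + 2 * q ^ 3 + 2 * q ^ 2 + q + 2) -
          D * (q^14 + q^13 + 2*q^12 + 3*q^11 + 2*q^10 + 6*q^9 + q^8 + 5*q^7 +
          8*q^6 - 7*q^5 + 16*q^4 - 8*q^3 + 4*q^2 + 4*q + 2) := by
        rw [hD]; ring
      rw [heq]
      exact dvd_sub h hq2
    have hR0 : -34*q^6 - 56*q^5 - 80*q^4 - 76*q^3 - 6*q^2 + 8*q + 4 ≠ 0 := by
      nlinarith [pow_pos (by linarith : (0:ℤ) < q) 6, pow_pos (by linarith : (0:ℤ) < q) 5,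
        pow_pos (by linarith : (0:ℤ) < q) 4, pow_pos (by linarith : (0:ℤ) < q) 3,
        sq_nonneg q]
    have habs : |(-34*q^6 - 56*q^5 - 80*q^4 - 76*q^3 - 6*q^2 + 8*q + 4)| < D := by
      have hRneg : -34*q^6 - 56*q^5 - 80*q^4 - 76*q^3 - 6*q^2 + 8*q + 4 < 0 := by
        nlinarith [pow_pos (by linarith : (0:ℤ) < q) 6, pow_pos (by linarith : (0:ℤ) < q) 5,
          pow_pos (by linarith : (0:ℤ) < q) 4, pow_pos (by linarith : (0:ℤ) < q) 3]
      rw [abs_of_neg hRneg, hD]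
      nlinarith [pow_pos (by linarith : (0:ℤ) < q) 6, pow_pos (by linarith : (0:ℤ) < q) 5,
        pow_pos (by linarith : (0:ℤ) < q) 4, pow_pos (by linarith : (0:ℤ) < q) 3,
        mul_le_mul_of_nonneg_left h31 (pow_pos (by linarith : (0:ℤ) < q) 6).le,
        mul_le_mul_of_nonneg_left h31 (pow_pos (by linarith : (0:ℤ) < q) 5).le]
    exact hR0 (Int.eq_zero_of_abs_lt_dvd h2 habs)
end

section
/- For every integer q≥2 and every odd integer D≥5, the integer (q−1)²(q+1) does not divide the integer q²(q^D−1)(q^{D+1}+1)(q^{2D−2}−q^{D−2}+q^{D−3}−1). -/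
/-!
Reducing modulo any `M` with `q ≡ -1 [ZMOD M]`, the three non-trivial factors of the numerator
become `-2`, `2` and `2` (this is where `D` odd enters), so the numerator is `≡ -8`.
Taking `M = q + 1` shows `q + 1 ∣ 8`, hence `4 ∣ q + 1`. Then `16 ∣ (q - 1) ^ 2 * (q + 1)`,
whereas taking `M = 4` shows each of the three factors is exactly once divisible by `2` and
`q ^ 2` is odd, so the numerator is `8` times an odd number.
-/

def f2Numerator (q : ℤ) (D : ℕ) : ℤ :=
  q ^ 2 * (q ^ D - 1) * (q ^ (D + 1) + 1) * (q ^ (2 * D - 2) - q ^ (D - 2) + q ^ (D - 3) - 1)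

lemma Int.modEq_neg_one_of_dvd_add_one {M q : ℤ} (h : M ∣ q + 1) : q ≡ -1 [ZMOD M] :=
  Int.modEq_iff_dvd.2 (by simpa [neg_add_eq_sub, add_comm] using h.neg_right)

section ModNegOne

variable {M q : ℤ} {D : ℕ}

lemma pow_sub_one_modEq_of_modEq_neg_one (h : q ≡ -1 [ZMOD M]) (hD : Odd D) :
    q ^ D - 1 ≡ -2 [ZMOD M] := by
  simpa [hD.neg_one_pow] using (h.pow D).sub_right 1

lemma pow_succ_add_one_modEq_of_modEq_neg_one (h : q ≡ -1 [ZMOD M]) (hD : Odd D) :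
    q ^ (D + 1) + 1 ≡ 2 [ZMOD M] := by
  simpa [hD.add_one.neg_one_pow, one_add_one_eq_two] using (h.pow (D + 1)).add_right 1

lemma f2Numerator_last_factor_modEq_of_modEq_neg_one (h : q ≡ -1 [ZMOD M]) (hD3 : 3 ≤ D) (hD : Odd D) :
    q ^ (2 * D - 2) - q ^ (D - 2) + q ^ (D - 3) - 1 ≡ 2 [ZMOD M] := by
  have heven₁ : Even (2 * D - 2) := ⟨D - 1, by omega⟩
  have hodd₂ : Odd (D - 2) := Nat.Odd.sub_even (by omega) hD even_two
  have heven₃ : Even (D - 3) := Nat.Odd.sub_odd hD (by decide)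
  have := (((h.pow (2 * D - 2)).sub (h.pow (D - 2))).add (h.pow (D - 3))).sub_right 1
  rw [heven₁.neg_one_pow, hodd₂.neg_one_pow, heven₃.neg_one_pow] at this
  exact this.trans (by norm_num)

lemma f2Numerator_modEq_neg_eight (h : q ≡ -1 [ZMOD M]) (hD3 : 3 ≤ D) (hD : Odd D) :
    f2Numerator q D ≡ -8 [ZMOD M] := by
  have := (((h.pow 2).mul (pow_sub_one_modEq_of_modEq_neg_one h hD)).mul
    (pow_succ_add_one_modEq_of_modEq_neg_one h hD)).mul
    (f2Numerator_last_factor_modEq_of_modEq_neg_one h hD3 hD)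
  exact this.trans (by norm_num)

end ModNegOne

lemma add_one_dvd_eight_of_dvd_f2Numerator {q : ℤ} {D : ℕ} (hD3 : 3 ≤ D) (hD : Odd D)
    (h : (q - 1) ^ 2 * (q + 1) ∣ f2Numerator q D) : q + 1 ∣ 8 := by
  have hmod : f2Numerator q D ≡ -8 [ZMOD q + 1] :=
    f2Numerator_modEq_neg_eight (Int.modEq_neg_one_of_dvd_add_one dvd_rfl) hD3 hD
  have hzero : f2Numerator q D ≡ 0 [ZMOD q + 1] :=
    Int.modEq_zero_iff_dvd.2 ((dvd_mul_left _ _).trans h)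
  simpa using (hmod.symm.trans hzero).dvd

lemma Int.four_dvd_of_dvd_eight {n : ℤ} (hn : 3 ≤ n) (h : n ∣ 8) : 4 ∣ n := by
  have := Int.le_of_dvd (by norm_num) h
  interval_cases n <;> omega

lemma Int.sixteen_dvd_sq_sub_one_mul_add_one {q : ℤ} (h : 4 ∣ q + 1) :
    16 ∣ (q - 1) ^ 2 * (q + 1) := by
  obtain ⟨k, hk⟩ := h
  exact ⟨k * (2 * k - 1) ^ 2, by rw [show q = 4 * k - 1 by linarith]; ring⟩

lemma Int.exists_odd_of_modEq_two {a : ℤ} (ha : a ≡ 2 [ZMOD 4]) : ∃ b, Odd b ∧ a = 2 * b := by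
  obtain ⟨k, hk⟩ := (Int.modEq_iff_dvd.1 ha.symm)
  exact ⟨2 * k + 1, odd_two_mul_add_one k, by linarith⟩

lemma Int.not_sixteen_dvd_of_modEq_two {u a b c : ℤ} (hu : Odd u) (ha : a ≡ 2 [ZMOD 4])
    (hb : b ≡ 2 [ZMOD 4]) (hc : c ≡ 2 [ZMOD 4]) : ¬ 16 ∣ u * a * b * c := by
  obtain ⟨a', ha', rfl⟩ := Int.exists_odd_of_modEq_two ha
  obtain ⟨b', hb', rfl⟩ := Int.exists_odd_of_modEq_two hb
  obtain ⟨c', hc', rfl⟩ := Int.exists_odd_of_modEq_two hc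
  obtain ⟨m, hm⟩ := ((hu.mul ha').mul hb').mul hc'
  rw [show u * (2 * a') * (2 * b') * (2 * c') = 8 * (u * a' * b' * c') by ring, hm]
  omega

theorem stmt13 (q : ℤ) (hq : 2 ≤ q) (D : ℕ) (hD : 5 ≤ D) (hodd : Odd D) :
    ¬ ((q - 1) ^ 2 * (q + 1) ∣
      q ^ 2 * (q ^ D - 1) * (q ^ (D + 1) + 1) *
        (q ^ (2 * D - 2) - q ^ (D - 2) + q ^ (D - 3) - 1)) := by
  intro h
  have hD3 : 3 ≤ D := by omega
  have h4 : 4 ∣ q + 1 :=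
    Int.four_dvd_of_dvd_eight (by omega) (add_one_dvd_eight_of_dvd_f2Numerator hD3 hodd h)
  have hq4 : q ≡ -1 [ZMOD 4] := Int.modEq_neg_one_of_dvd_add_one h4
  have hq_odd : Odd q := by
    obtain ⟨k, hk⟩ := h4
    exact ⟨2 * k - 1, by linarith⟩
  exact Int.not_sixteen_dvd_of_modEq_two hq_odd.pow
    ((pow_sub_one_modEq_of_modEq_neg_one hq4 hodd).trans (by decide))
    (pow_succ_add_one_modEq_of_modEq_neg_one hq4 hodd)
    (f2Numerator_last_factor_modEq_of_modEq_neg_one hq4 hD3 hodd)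
    ((Int.sixteen_dvd_sq_sub_one_mul_add_one h4).trans h)
end

section
/- For every integer q≥2 and every integer D≥8 with D≡2 (mod 6), the integer q²+q+1 does not divide the integer (q^D−1)(q^{D+1}+1)(q^{2D+1}−q^{D+1}+q^D−q)(q^{2D−2}−q^{D−2}+q^{D−3}−q²). -/
theorem stmt17 (q : ℤ) (hq : 2 ≤ q) (D : ℕ) (hD : 8 ≤ D) (hmod : D % 6 = 2) :
    ¬ (q ^ 2 + q + 1 ∣
      (q ^ D - 1) * (q ^ (D + 1) + 1) * (q ^ (2 * D + 1) - q ^ (D + 1) + q ^ D - q) *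
        (q ^ (2 * D - 2) - q ^ (D - 2) + q ^ (D - 3) - q ^ 2)) := by
  obtain ⟨j, rfl⟩ : ∃ j, D = 6 * j + 8 := ⟨(D - 8) / 6, by omega⟩
  intro h
  set m : ℤ := q ^ 2 + q + 1 with hm
  have h3 : (q : ℤ) ^ 3 ≡ 1 [ZMOD m] := Int.modEq_iff_dvd.mpr ⟨-(q - 1), by ring⟩
  have hpow : ∀ n r : ℕ, (q : ℤ) ^ (3 * n + r) ≡ q ^ r [ZMOD m] := by
    intro n r
    calc (q:ℤ) ^ (3 * n + r) = ((q:ℤ) ^ 3) ^ n * q ^ r := by ring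
    _ ≡ 1 ^ n * q ^ r [ZMOD m] := (h3.pow n).mul_right _
    _ = q ^ r := by ring
  have e1 : (q : ℤ) ^ (6 * j + 8) ≡ q ^ 2 [ZMOD m] := by
    have := hpow (2 * j + 2) 2; convert this using 2; omega
  have e2 : (q : ℤ) ^ (6 * j + 8 + 1) ≡ 1 [ZMOD m] := by
    have := hpow (2 * j + 3) 0; simpa using (by convert this using 2; omega : (q:ℤ) ^ (6*j+8+1) ≡ q ^ 0 [ZMOD m])
  have e3 : (q : ℤ) ^ (2 * (6 * j + 8) + 1) ≡ q ^ 2 [ZMOD m] := by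
    have := hpow (4 * j + 5) 2; convert this using 2; omega
  have e4 : (q : ℤ) ^ (2 * (6 * j + 8) - 2) ≡ q ^ 2 [ZMOD m] := by
    have := hpow (4 * j + 4) 2; convert this using 2; omega
  have e5 : (q : ℤ) ^ (6 * j + 8 - 2) ≡ 1 [ZMOD m] := by
    have := hpow (2 * j + 2) 0; simpa using (by convert this using 2; omega : (q:ℤ) ^ (6*j+8-2) ≡ q ^ 0 [ZMOD m])
  have e6 : (q : ℤ) ^ (6 * j + 8 - 3) ≡ q ^ 2 [ZMOD m] := by
    have := hpow (2 * j + 1) 2; convert this using 2; omega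
  have hc : ((q:ℤ) ^ (6*j+8) - 1) * (q ^ (6*j+8 + 1) + 1) *
      (q ^ (2 * (6*j+8) + 1) - q ^ (6*j+8 + 1) + q ^ (6*j+8) - q) *
      (q ^ (2 * (6*j+8) - 2) - q ^ (6*j+8 - 2) + q ^ (6*j+8 - 3) - q ^ 2) ≡
      (q ^ 2 - 1) * (1 + 1) * (q ^ 2 - 1 + q ^ 2 - q) * (q ^ 2 - 1 + q ^ 2 - q ^ 2) [ZMOD m] :=
    ((((e1.sub_right 1).mul (e2.add_right 1)).mul
      (((e3.sub e2).add e1).sub_right q)).mul (((e4.sub e5).add e6).sub_right (q^2)))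
  have hc2 : m ∣ (q ^ 2 - 1) * (1 + 1) * (q ^ 2 - 1 + q ^ 2 - q) * (q ^ 2 - 1 + q ^ 2 - q ^ 2) :=
    Int.modEq_zero_iff_dvd.mp (hc.symm.trans (Int.modEq_zero_iff_dvd.mpr h))
  have h18q : m ∣ 18 * q := by
    have hs : m ∣ (q ^ 2 - 1) * (1 + 1) * (q ^ 2 - 1 + q ^ 2 - q) * (q ^ 2 - 1 + q ^ 2 - q ^ 2)
        + 18 * q := ⟨4*q^4 - 6*q^3 - 8*q^2 + 18*q - 2, by ring⟩
    simpa using hs.sub hc2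
  have hco : IsCoprime m q := ⟨1, -(q + 1), by ring⟩
  have h18 : m ∣ 18 := hco.dvd_of_dvd_mul_right h18q
  have hle : m ≤ 18 := Int.le_of_dvd (by norm_num) h18
  have hq3 : q ≤ 3 := by nlinarith
  interval_cases q <;> simp_all <;> omega
end

section
/- For every integer q≥2 and every integer D≥4 with D≡4 (mod 6), the integer q²+q+1 does not divide the integer (q^D−1)(q^{D+1}+1)(q^{2D+1}−q^{D+1}+q^D−q)(q^{2D−2}−q^{D−2}+q^{D−3}−q²). -/
theorem stmt18 (q : ℤ) (hq : 2 ≤ q) (D : ℕ) (hD : 4 ≤ D) (hmod : D % 6 = 4) :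
    ¬ (q ^ 2 + q + 1 ∣
      (q ^ D - 1) * (q ^ (D + 1) + 1) * (q ^ (2 * D + 1) - q ^ (D + 1) + q ^ D - q) *
        (q ^ (2 * D - 2) - q ^ (D - 2) + q ^ (D - 3) - q ^ 2)) := by
  intro hP
  obtain ⟨k, rfl⟩ : ∃ k, D = 6 * k + 4 := ⟨D / 6, by omega⟩
  set m : ℤ := q ^ 2 + q + 1 with hm
  have h3 : (q : ℤ) ^ 3 ≡ 1 [ZMOD m] := by
    exact Int.modEq_iff_dvd.mpr ⟨1 - q, by ring⟩
  have hpow : ∀ a b : ℕ, q ^ (3 * a + b) ≡ q ^ b [ZMOD m] := by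
    intro a b
    calc q ^ (3 * a + b) = (q ^ 3) ^ a * q ^ b := by
          rw [pow_add, pow_mul]
      _ ≡ 1 ^ a * q ^ b [ZMOD m] := (h3.pow a).mul_right _
      _ = q ^ b := by ring
  have h1 : q ^ (6 * k + 4) ≡ q ^ 1 [ZMOD m] := by
    have := hpow (2 * k + 1) 1; rwa [show 3 * (2 * k + 1) + 1 = 6 * k + 4 by ring] at this
  have h2 : q ^ (6 * k + 4 + 1) ≡ q ^ 2 [ZMOD m] := by
    have := hpow (2 * k + 1) 2; rwa [show 3 * (2 * k + 1) + 2 = 6 * k + 4 + 1 by ring] at this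
  have h4 : q ^ (2 * (6 * k + 4) + 1) ≡ q ^ 0 [ZMOD m] := by
    have := hpow (4 * k + 3) 0; rwa [show 3 * (4 * k + 3) + 0 = 2 * (6 * k + 4) + 1 by ring] at this
  have h5 : q ^ (2 * (6 * k + 4) - 2) ≡ q ^ 0 [ZMOD m] := by
    have := hpow (4 * k + 2) 0
    rwa [show 3 * (4 * k + 2) + 0 = 2 * (6 * k + 4) - 2 by omega] at this
  have h6 : q ^ (6 * k + 4 - 2) ≡ q ^ 2 [ZMOD m] := by
    have := hpow (2 * k) 2; rwa [show 3 * (2 * k) + 2 = 6 * k + 4 - 2 by omega] at this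
  have h7 : q ^ (6 * k + 4 - 3) ≡ q ^ 1 [ZMOD m] := by
    have := hpow (2 * k) 1; rwa [show 3 * (2 * k) + 1 = 6 * k + 4 - 3 by omega] at this
  have hPR : (q ^ (6 * k + 4) - 1) * (q ^ (6 * k + 4 + 1) + 1) *
        (q ^ (2 * (6 * k + 4) + 1) - q ^ (6 * k + 4 + 1) + q ^ (6 * k + 4) - q) *
        (q ^ (2 * (6 * k + 4) - 2) - q ^ (6 * k + 4 - 2) + q ^ (6 * k + 4 - 3) - q ^ 2) ≡
      (q ^ 1 - 1) * (q ^ 2 + 1) * (q ^ 0 - q ^ 2 + q ^ 1 - q) *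
        (q ^ 0 - q ^ 2 + q ^ 1 - q ^ 2) [ZMOD m] :=
    (((h1.sub_right 1).mul (h2.add_right 1)).mul
      (((h4.sub h2).add h1).sub_right q)).mul (((h5.sub h6).add h7).sub_right (q ^ 2))
  have hR9 : m ∣ (q ^ 1 - 1) * (q ^ 2 + 1) * (q ^ 0 - q ^ 2 + q ^ 1 - q) *
      (q ^ 0 - q ^ 2 + q ^ 1 - q ^ 2) + 9 :=
    ⟨2 * q ^ 5 - 5 * q ^ 4 + 3 * q ^ 3 + 3 * q ^ 2 - 8 * q + 8, by ring⟩
  have hdiff := hPR.dvd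
  have h9 : m ∣ 9 := by
    have := dvd_sub (dvd_sub hR9 hdiff) hP
    have e : (q ^ 1 - 1) * (q ^ 2 + 1) * (q ^ 0 - q ^ 2 + q ^ 1 - q) *
          (q ^ 0 - q ^ 2 + q ^ 1 - q ^ 2) + 9 -
        ((q ^ 1 - 1) * (q ^ 2 + 1) * (q ^ 0 - q ^ 2 + q ^ 1 - q) *
            (q ^ 0 - q ^ 2 + q ^ 1 - q ^ 2) -
          (q ^ (6 * k + 4) - 1) * (q ^ (6 * k + 4 + 1) + 1) *
            (q ^ (2 * (6 * k + 4) + 1) - q ^ (6 * k + 4 + 1) + q ^ (6 * k + 4) - q) *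
            (q ^ (2 * (6 * k + 4) - 2) - q ^ (6 * k + 4 - 2) + q ^ (6 * k + 4 - 3) - q ^ 2)) -
        (q ^ (6 * k + 4) - 1) * (q ^ (6 * k + 4 + 1) + 1) *
          (q ^ (2 * (6 * k + 4) + 1) - q ^ (6 * k + 4 + 1) + q ^ (6 * k + 4) - q) *
          (q ^ (2 * (6 * k + 4) - 2) - q ^ (6 * k + 4 - 2) + q ^ (6 * k + 4 - 3) - q ^ 2) = 9 := by
      ring
    rwa [e] at this
  have hle : m ≤ 9 := Int.le_of_dvd (by norm_num) h9
  have hq2 : q = 2 := by nlinarith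
  rw [hm, hq2] at h9
  norm_num at h9
end

section
/- There do not exist integers q≥2 and D≥4 and a positive rational number α such that α(q+1) is a positive integer, (αq^D+αq²−q²−αq−q−α+2)/(q−1) is an integer, and α(2q^{D−1}−q³−q²+q−1) ≤ q²−1. -/
theorem stmt19 :
    ¬ ∃ (q : ℤ) (D : ℕ) (α : ℚ), 2 ≤ q ∧ 4 ≤ D ∧ 0 < α ∧
      (∃ m : ℤ, 0 < m ∧ α * ((q : ℚ) + 1) = (m : ℚ)) ∧
      (∃ l : ℤ, (α * (q : ℚ) ^ D + α * (q : ℚ) ^ 2 - (q : ℚ) ^ 2 - α * (q : ℚ) - (q : ℚ)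
        - α + 2) / ((q : ℚ) - 1) = (l : ℚ)) ∧
      α * (2 * (q : ℚ) ^ (D - 1) - (q : ℚ) ^ 3 - (q : ℚ) ^ 2 + (q : ℚ) - 1)
        ≤ (q : ℚ) ^ 2 - 1 := by
  rintro ⟨q, D, α, hq, hD, hα, ⟨m, hm, hαm⟩, ⟨l, hl⟩, hineq⟩
  have hqQ : (2:ℚ) ≤ (q:ℚ) := by exact_mod_cast hq
  have hq1 : (1:ℚ) ≤ (q:ℚ) := by linarith
  have hmQ : (1:ℚ) ≤ (m:ℚ) := by exact_mod_cast hm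
  have hq3pos : (0:ℚ) < (q:ℚ)^3 := by positivity
  have hq2pos : (0:ℚ) < (q:ℚ)^2 := by positivity
  have hqpos : (0:ℚ) < (q:ℚ) := by linarith
  have hq4 : 2*(q:ℚ)^3 ≤ (q:ℚ)^4 := by
    nlinarith [mul_nonneg (show (0:ℚ) ≤ (q:ℚ)-2 by linarith) hq3pos.le]
  have hq3 : 2*(q:ℚ)^2 ≤ (q:ℚ)^3 := by
    nlinarith [mul_nonneg (show (0:ℚ) ≤ (q:ℚ)-2 by linarith) hq2pos.le]
  have hq2 : 2*(q:ℚ) ≤ (q:ℚ)^2 := by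
    nlinarith [mul_nonneg (show (0:ℚ) ≤ (q:ℚ)-2 by linarith) hqpos.le]
  have hD4 : D = 4 := by
    by_contra h
    have h41 : 4 ≤ D - 1 := by omega
    have hpow : (q:ℚ)^4 ≤ (q:ℚ)^(D-1) := pow_le_pow_right₀ hq1 h41
    have hXpos : (0:ℚ) < 2*(q:ℚ)^(D-1) - (q:ℚ)^3 - (q:ℚ)^2 + (q:ℚ) - 1 := by
      linarith
    have hmul := mul_le_mul_of_nonneg_right hineq
      (show (0:ℚ) ≤ (q:ℚ)+1 by linarith)
    have heq : α * (2*(q:ℚ)^(D-1) - (q:ℚ)^3 - (q:ℚ)^2 + (q:ℚ) - 1) * ((q:ℚ)+1)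
        = (m:ℚ) * (2*(q:ℚ)^(D-1) - (q:ℚ)^3 - (q:ℚ)^2 + (q:ℚ) - 1) := by
      rw [← hαm]; ring
    have hkey : (m:ℚ) * (2*(q:ℚ)^(D-1) - (q:ℚ)^3 - (q:ℚ)^2 + (q:ℚ) - 1)
        ≤ ((q:ℚ)^2-1)*((q:ℚ)+1) := by rw [← heq]; exact hmul
    have hge : 2*(q:ℚ)^(D-1) - (q:ℚ)^3 - (q:ℚ)^2 + (q:ℚ) - 1
        ≤ (m:ℚ) * (2*(q:ℚ)^(D-1) - (q:ℚ)^3 - (q:ℚ)^2 + (q:ℚ) - 1) := by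
      have := mul_le_mul_of_nonneg_right hmQ hXpos.le
      linarith [this]
    nlinarith [hge.trans hkey, hpow, hq4, hq3, hq2, hqQ]
  subst hD4
  norm_num at hl hineq
  have hne : (q:ℚ) - 1 ≠ 0 := by
    intro h
    have : (q:ℚ) = 1 := by linarith
    linarith
  have E : α * (q:ℚ) ^ 4 + α * (q:ℚ) ^ 2 - (q:ℚ) ^ 2 - α * (q:ℚ) - (q:ℚ) - α + 2
      = l * ((q:ℚ) - 1) := (div_eq_iff hne).mp hl
  have hm1 : m = 1 := by
    have hXpos : (0:ℚ) < 2*(q:ℚ)^3 - (q:ℚ)^3 - (q:ℚ)^2 + (q:ℚ) - 1 := by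
      linarith
    have hmul := mul_le_mul_of_nonneg_right hineq
      (show (0:ℚ) ≤ (q:ℚ)+1 by linarith)
    have heq : α * (2*(q:ℚ)^3 - (q:ℚ)^3 - (q:ℚ)^2 + (q:ℚ) - 1) * ((q:ℚ)+1)
        = (m:ℚ) * (2*(q:ℚ)^3 - (q:ℚ)^3 - (q:ℚ)^2 + (q:ℚ) - 1) := by
      rw [← hαm]; ring
    have hkey : (m:ℚ) * (2*(q:ℚ)^3 - (q:ℚ)^3 - (q:ℚ)^2 + (q:ℚ) - 1)
        ≤ ((q:ℚ)^2-1)*((q:ℚ)+1) := by rw [← heq]; exact hmul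
    have h2' : (m:ℚ) < 2 := by
      by_contra h2
      push_neg at h2
      have hge : 2 * (2*(q:ℚ)^3 - (q:ℚ)^3 - (q:ℚ)^2 + (q:ℚ) - 1)
          ≤ (m:ℚ) * (2*(q:ℚ)^3 - (q:ℚ)^3 - (q:ℚ)^2 + (q:ℚ) - 1) :=
        mul_le_mul_of_nonneg_right h2 hXpos.le
      have hcube : (1:ℚ) ≤ ((q:ℚ)-1)^3 := one_le_pow₀ (by linarith)
      nlinarith [hge.trans hkey, hcube]
    have : m < 2 := by exact_mod_cast h2'
    omega
  rw [hm1] at hαm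
  push_cast at hαm
  have G : (q:ℚ)^4 - (q:ℚ)^3 - (q:ℚ)^2 + 1 = l * ((q:ℚ)^2 - 1) := by
    linear_combination ((q:ℚ)+1) * E - ((q:ℚ)^4+(q:ℚ)^2-(q:ℚ)-1) * hαm
  have hz : q^4 - q^3 - q^2 + 1 = l * (q^2 - 1) := by exact_mod_cast G
  have h2 : (l - q^2 + q + 1) * (q+1) * (q-1) = q * (q-1) := by linear_combination -hz
  have h3 : (l - q^2 + q + 1) * (q+1) = q :=
    mul_right_cancel₀ (by omega : q - 1 ≠ 0) h2
  rcases le_or_gt (l - q^2 + q + 1) 0 with h | h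
  · nlinarith [h3, hq]
  · nlinarith [h3, hq, h]
end
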